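/- arXiv:1109.4888 — 4 statements merged into one kernel-verified Lean document; each statement's English description precedes it below -/
import Mathlib

section
/- Let H be an n×n complex Hadamard matrix with rows H_1,…,H_n viewed as invertible elements of ℂ^n (entrywise operations). Then the rank-one orthogonal projections P_{ij} = Proj(H_i/H_j) onto the vectors with entries H_{ik}·conj(H_{jk}) form a magic unitary: for each fixed i, the projections P_{i1},…,P_{in} sum to the identity, and likewise for each fixed j, the projections P_{1j},…,P_{nj} sum to the identity. -/
/-!
Each `P i j` is `n⁻¹ ξ ξᴴ` for `ξ = H_i / H_j`, a rank-one projection because `ξ` has unimodular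
entries, so `ξᴴ ξ = n`. Entrywise, both the row and the column sums of the `ξ ξᴴ` reduce to the
column orthogonality `Hᴴ H = n • 1`, which follows from the row orthogonality `H Hᴴ = n • 1`
because a one-sided inverse of a square matrix is two-sided.
-/

open ComplexConjugate Matrix

namespace Matrix

variable {ι : Type*}

section Field

variable {K : Type*} [Field K] [Fintype ι]

theorem isStarProjection_inv_smul_vecMulVec_star [StarRing K] {v : ι → K} {c : K}
    (hv : star v ⬝ᵥ v = c) (hc : c ≠ 0) :
    IsStarProjection (c⁻¹ • vecMulVec v (star v)) where
  isIdempotentElem := by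
    rw [IsIdempotentElem, smul_mul_smul_comm, vecMulVec_mul_vecMulVec, hv, vecMulVec_smul,
      smul_smul, mul_assoc, inv_mul_cancel₀ hc, mul_one]
  isSelfAdjoint := by
    rw [IsSelfAdjoint, star_eq_conjTranspose, conjTranspose_smul, conjTranspose_vecMulVec,
      star_star, star_inv₀, ← hv, ← star_dotProduct]

theorem mul_eq_smul_one_comm [DecidableEq ι] {A B : Matrix ι ι K} {c : K} (hc : c ≠ 0)
    (h : A * B = c • 1) : B * A = c • 1 := by
  have hinv : A * (c⁻¹ • B) = 1 := by
    rw [Matrix.mul_smul, h, smul_smul, inv_mul_cancel₀ hc, one_smul]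
  calc B * A = c • ((c⁻¹ • B) * A) := by rw [smul_mul, smul_smul, mul_inv_cancel₀ hc, one_smul]
    _ = c • 1 := by rw [mul_eq_one_comm.1 hinv]

end Field

section Hadamard

variable {𝕜 : Type*} [RCLike 𝕜] {H : Matrix ι ι 𝕜}

theorem conj_mul_self_of_norm_eq_one {z : 𝕜} (hz : ‖z‖ = 1) : conj z * z = 1 := by
  rw [RCLike.conj_mul, hz]
  norm_num

/-- The entrywise quotient `H_i / H_j` of two rows, computed as `H_i * conj H_j`, which agrees
with it when the entries are unimodular. -/
def rowRatio (H : Matrix ι ι 𝕜) (i j : ι) : ι → 𝕜 := H i * star (H j)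

theorem rowRatio_apply (i j k : ι) : rowRatio H i j k = H i k * conj (H j k) := rfl

variable [Fintype ι]

theorem star_rowRatio_dotProduct_self (hmod : ∀ i j, ‖H i j‖ = 1) (i j : ι) :
    star (rowRatio H i j) ⬝ᵥ rowRatio H i j = Fintype.card ι := by
  have hξ : ∀ k, ‖rowRatio H i j k‖ = 1 := by simp [rowRatio_apply, hmod]
  simp [dotProduct, conj_mul_self_of_norm_eq_one (hξ _)]

variable [DecidableEq ι]

theorem mul_conjTranspose_eq_card_smul_one (hmod : ∀ i j, ‖H i j‖ = 1)
    (hrows : ∀ i j, i ≠ j → ∑ k, H i k * conj (H j k) = 0) :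
    H * Hᴴ = (Fintype.card ι : 𝕜) • 1 := by
  ext i j
  rw [mul_apply, smul_apply, one_apply]
  obtain rfl | hij := eq_or_ne i j
  · simp [mul_comm (H i _), conj_mul_self_of_norm_eq_one (hmod _ _)]
  · simp [conjTranspose_apply, hrows i j hij, hij]

theorem conjTranspose_mul_eq_card_smul_one (hmod : ∀ i j, ‖H i j‖ = 1)
    (hrows : ∀ i j, i ≠ j → ∑ k, H i k * conj (H j k) = 0) :
    Hᴴ * H = (Fintype.card ι : 𝕜) • 1 := by
  cases isEmpty_or_nonempty ι
  · exact Subsingleton.elim _ _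
  exact mul_eq_smul_one_comm (Nat.cast_ne_zero.2 Fintype.card_ne_zero)
    (mul_conjTranspose_eq_card_smul_one hmod hrows)

theorem sum_conj_mul_eq_ite (hmod : ∀ i j, ‖H i j‖ = 1)
    (hrows : ∀ i j, i ≠ j → ∑ k, H i k * conj (H j k) = 0) (k l : ι) :
    ∑ i, conj (H i k) * H i l = if k = l then (Fintype.card ι : 𝕜) else 0 := by
  simpa [mul_apply, one_apply] using
    congrFun (congrFun (conjTranspose_mul_eq_card_smul_one hmod hrows) k) l

theorem sum_vecMulVec_rowRatio_right (hmod : ∀ i j, ‖H i j‖ = 1)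
    (hrows : ∀ i j, i ≠ j → ∑ k, H i k * conj (H j k) = 0) (i : ι) :
    ∑ j, vecMulVec (rowRatio H i j) (star (rowRatio H i j)) = (Fintype.card ι : 𝕜) • 1 := by
  ext k l
  calc (∑ j, vecMulVec (rowRatio H i j) (star (rowRatio H i j))) k l
      = H i k * conj (H i l) * ∑ j, conj (H j k) * H j l := by
        simp only [sum_apply, vecMulVec_apply, Pi.star_apply, rowRatio_apply, Finset.mul_sum,
          RCLike.star_def, map_mul, RCLike.conj_conj]
        exact Finset.sum_congr rfl fun j _ => by ring
    _ = ((Fintype.card ι : 𝕜) • (1 : Matrix ι ι 𝕜)) k l := by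
        rw [sum_conj_mul_eq_ite hmod hrows]
        obtain rfl | hkl := eq_or_ne k l
        · simp [mul_comm (H i k), conj_mul_self_of_norm_eq_one (hmod _ _)]
        · simp [hkl]

theorem sum_vecMulVec_rowRatio_left (hmod : ∀ i j, ‖H i j‖ = 1)
    (hrows : ∀ i j, i ≠ j → ∑ k, H i k * conj (H j k) = 0) (j : ι) :
    ∑ i, vecMulVec (rowRatio H i j) (star (rowRatio H i j)) = (Fintype.card ι : 𝕜) • 1 := by
  ext k l
  calc (∑ i, vecMulVec (rowRatio H i j) (star (rowRatio H i j))) k l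
      = conj (H j k) * H j l * ∑ i, conj (H i l) * H i k := by
        simp only [sum_apply, vecMulVec_apply, Pi.star_apply, rowRatio_apply, Finset.mul_sum,
          RCLike.star_def, map_mul, RCLike.conj_conj]
        exact Finset.sum_congr rfl fun i _ => by ring
    _ = ((Fintype.card ι : 𝕜) • (1 : Matrix ι ι 𝕜)) k l := by
        rw [sum_conj_mul_eq_ite hmod hrows]
        obtain rfl | hkl := eq_or_ne k l
        · simp [conj_mul_self_of_norm_eq_one (hmod _ _)]
        · simp [hkl, hkl.symm]

end Hadamard

end Matrix

/-- For a complex Hadamard matrix `H` with rows `H_1,…,H_n`, the rank-one projections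
`P_{ij} = Proj(H_i/H_j)`, written as `n × n` matrices
`(P_{ij})_{kl} = (1/n) · (H_{ik} conj(H_{jk})) · conj(H_{il} conj(H_{jl}))`,
form a magic unitary: each entry is an orthogonal projection, and each row and each
column sums to the identity. -/
theorem hadamard_magic_unitary {n : ℕ} (hn : 0 < n) (H : Matrix (Fin n) (Fin n) ℂ)
    (hmod : ∀ i j, ‖H i j‖ = 1)
    (hrows : ∀ i j, i ≠ j → ∑ k, H i k * (starRingEnd ℂ) (H j k) = 0)
    (P : Fin n → Fin n → Matrix (Fin n) (Fin n) ℂ)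
    (hP : ∀ i j, P i j = Matrix.of fun k l =>
      (H i k * (starRingEnd ℂ) (H j k)) *
        (starRingEnd ℂ) (H i l * (starRingEnd ℂ) (H j l)) / n) :
    (∀ i j, (P i j)ᴴ = P i j ∧ P i j * P i j = P i j) ∧
    (∀ i, ∑ j, P i j = 1) ∧ (∀ j, ∑ i, P i j = 1) := by
  have hn' : (n : ℂ) ≠ 0 := Nat.cast_ne_zero.2 hn.ne'
  have hP' : ∀ i j, P i j = (n : ℂ)⁻¹ • vecMulVec (rowRatio H i j) (star (rowRatio H i j)) := by
    intro i j
    ext k l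
    simp [hP, rowRatio_apply, vecMulVec_apply, div_eq_inv_mul]
  refine ⟨fun i j => ?_, fun i => ?_, fun j => ?_⟩
  · have hproj := isStarProjection_inv_smul_vecMulVec_star
      (by simpa using star_rowRatio_dotProduct_self hmod i j) hn'
    rw [hP']
    exact ⟨hproj.isSelfAdjoint, hproj.isIdempotentElem⟩
  · simp_rw [hP', ← Finset.smul_sum, sum_vecMulVec_rowRatio_right hmod hrows, Fintype.card_fin,
      inv_smul_smul₀ hn']
  · simp_rw [hP', ← Finset.smul_sum, sum_vecMulVec_rowRatio_left hmod hrows, Fintype.card_fin,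
      inv_smul_smul₀ hn']
end

section
/- If (u_{ij}) is a 3×3 magic matrix of projections on a Hilbert space (each entry a self-adjoint idempotent, rows and columns summing to the identity), then all nine entries pairwise commute. -/
open scoped InnerProductSpace

section MagicAux

variable {E : Type*} [NormedAddCommGroup E] [InnerProductSpace ℂ E] [CompleteSpace E]

/-- third index -/
def magicThd (a b : Fin 3) : Fin 3 := ⟨(a.val + b.val) * 2 % 3, by omega⟩

lemma magicThd_ne_left : ∀ a b : Fin 3, a ≠ b → magicThd a b ≠ a := by decide
lemma magicThd_ne_right : ∀ a b : Fin 3, a ≠ b → magicThd a b ≠ b := by decide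
lemma magicThd_thd_right : ∀ a b : Fin 3, a ≠ b → magicThd (magicThd a b) b = a := by decide
lemma magicThd_right_thd : ∀ a b : Fin 3, a ≠ b → magicThd b (magicThd a b) = a := by decide

lemma magic_tripsum {M : Type*} [AddCommMonoid M] (f : Fin 3 → M) (a b c : Fin 3)
    (hab : a ≠ b) (hac : a ≠ c) (hbc : b ≠ c) : f a + f b + f c = ∑ x, f x := by
  fin_cases a <;> fin_cases b <;> fin_cases c <;>
    simp_all [Fin.sum_univ_three] <;> abel

lemma magic_proj_inner (s : E →L[ℂ] E) (hs : IsSelfAdjoint s) (hsi : IsIdempotentElem s)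
    (y : E) : ⟪y, s y⟫_ℂ = (‖s y‖ : ℂ) ^ 2 := by
  have h1 : ⟪s y, s y⟫_ℂ = ⟪y, s (s y)⟫_ℂ := by
    nth_rewrite 1 [← hs.adjoint_eq]
    exact ContinuousLinearMap.adjoint_inner_left s (s y) y
  have h2 : s (s y) = s y := by
    conv_rhs => rw [← hsi]
    rfl
  rw [h2] at h1
  rw [← h1, inner_self_eq_norm_sq_to_K]
  norm_cast

lemma magic_orth (p q r : E →L[ℂ] E)
    (hp : IsSelfAdjoint p) (hpi : IsIdempotentElem p)
    (hq : IsSelfAdjoint q) (hqi : IsIdempotentElem q)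
    (hr : IsSelfAdjoint r) (hri : IsIdempotentElem r)
    (hsum : p + q + r = 1) : q * p = 0 := by
  ext x
  have hpx : p (p x) = p x := by
    conv_rhs => rw [← hpi]
    rfl
  have hsum' : q (p x) + r (p x) = 0 := by
    have h := congrArg (fun T : E →L[ℂ] E => T (p x)) hsum
    simp only [ContinuousLinearMap.add_apply, ContinuousLinearMap.one_apply] at h
    rw [hpx, add_assoc] at h
    exact (add_eq_left).mp h
  have hinner : ⟪p x, q (p x)⟫_ℂ + ⟪p x, r (p x)⟫_ℂ = 0 := by
    rw [← inner_add_right, hsum', inner_zero_right]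
  rw [magic_proj_inner q hq hqi, magic_proj_inner r hr hri] at hinner
  have hre : (‖q (p x)‖ : ℝ) ^ 2 + (‖r (p x)‖ : ℝ) ^ 2 = 0 := by
    exact_mod_cast hinner
  have h0 : ‖q (p x)‖ = 0 := by
    nlinarith [norm_nonneg (q (p x)), norm_nonneg (r (p x))]
  simp [ContinuousLinearMap.mul_apply, norm_eq_zero.mp h0]

end MagicAux

/-- If `(u_{ij})` is a `3 × 3` magic matrix of orthogonal projections on a Hilbert
space (each entry a self-adjoint idempotent, each row and column summing to the
identity), then all nine entries pairwise commute. -/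
theorem magic_three_by_three_commutes {E : Type*} [NormedAddCommGroup E]
    [InnerProductSpace ℂ E] [CompleteSpace E]
    (u : Matrix (Fin 3) (Fin 3) (E →L[ℂ] E))
    (hproj : ∀ i j, IsSelfAdjoint (u i j) ∧ IsIdempotentElem (u i j))
    (hrow : ∀ i, ∑ j, u i j = 1) (hcol : ∀ j, ∑ i, u i j = 1) :
    ∀ i j k l, Commute (u i j) (u k l) := by
  -- row sums for an arbitrary enumeration of columns
  have hrow3 : ∀ (i : Fin 3) (a b c : Fin 3), a ≠ b → a ≠ c → b ≠ c →
      u i a + u i b + u i c = 1 := by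
    intro i a b c hab hac hbc
    rw [magic_tripsum (fun x => u i x) a b c hab hac hbc]
    exact hrow i
  have hcol3 : ∀ (j : Fin 3) (a b c : Fin 3), a ≠ b → a ≠ c → b ≠ c →
      u a j + u b j + u c j = 1 := by
    intro j a b c hab hac hbc
    rw [magic_tripsum (fun x => u x j) a b c hab hac hbc]
    exact hcol j
  -- orthogonality within a row
  have horow : ∀ (i : Fin 3) (a b : Fin 3), a ≠ b → u i a * u i b = 0 := by
    intro i a b hab
    refine magic_orth (u i b) (u i a) (u i (magicThd a b))
      (hproj i b).1 (hproj i b).2 (hproj i a).1 (hproj i a).2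
      (hproj i (magicThd a b)).1 (hproj i (magicThd a b)).2 ?_
    exact hrow3 i b a (magicThd a b) (Ne.symm hab)
      (Ne.symm (magicThd_ne_right a b hab)) (Ne.symm (magicThd_ne_left a b hab))
  -- orthogonality within a column
  have hocol : ∀ (j : Fin 3) (a b : Fin 3), a ≠ b → u a j * u b j = 0 := by
    intro j a b hab
    refine magic_orth (u b j) (u a j) (u (magicThd a b) j)
      (hproj b j).1 (hproj b j).2 (hproj a j).1 (hproj a j).2
      (hproj (magicThd a b) j).1 (hproj (magicThd a b) j).2 ?_
    exact hcol3 j b a (magicThd a b) (Ne.symm hab)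
      (Ne.symm (magicThd_ne_right a b hab)) (Ne.symm (magicThd_ne_left a b hab))
  -- the key "third index" relation
  have hR : ∀ a b c d : Fin 3, a ≠ c → b ≠ d →
      u a b * u c d = u a b * u (magicThd a c) (magicThd b d) := by
    intro a b c d hac hbd
    set m := magicThd a c with hm
    set n := magicThd b d with hn
    have hcd : u c d = 1 - u c b - u c n := by
      have h := hrow3 c b d n hbd (Ne.symm (magicThd_ne_left b d hbd))
        (Ne.symm (magicThd_ne_right b d hbd))
      rw [← h]; abel
    have hcn : u c n = 1 - u a n - u m n := by
      have h := hcol3 n a c m hac (Ne.symm (magicThd_ne_left a c hac))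
        (Ne.symm (magicThd_ne_right a c hac))
      rw [← h]; abel
    have e1 : u a b * u c d = u a b - u a b * u c n := by
      rw [hcd, mul_sub, mul_sub, mul_one, hocol b a c hac]
      abel
    have e2 : u a b * u c n = u a b - u a b * u m n := by
      rw [hcn, mul_sub, mul_sub, mul_one, horow a b n (Ne.symm (magicThd_ne_left b d hbd))]
      abel
    rw [e1, e2]; abel
  have hstar : ∀ a b : Fin 3, star (u a b) = u a b := fun a b => (hproj a b).1
  intro i j k l
  rcases eq_or_ne i k with rfl | hik
  · rcases eq_or_ne j l with rfl | hjl
    · exact Commute.refl _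
    · show u i j * u i l = u i l * u i j
      rw [horow i j l hjl, horow i l j (Ne.symm hjl)]
  · rcases eq_or_ne j l with rfl | hjl
    · show u i j * u k j = u k j * u i j
      rw [hocol j i k hik, hocol j k i (Ne.symm hik)]
    · set m := magicThd i k with hm
      set n := magicThd j l with hn
      have hmi : m ≠ i := magicThd_ne_left i k hik
      have hmk : m ≠ k := magicThd_ne_right i k hik
      have hnj : n ≠ j := magicThd_ne_left j l hjl
      have hnl : n ≠ l := magicThd_ne_right j l hjl
      have h1 : u i j * u k l = u i j * u m n := hR i j k l hik hjl
      have h2 : u m n * u k l = u m n * u i j := by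
        have := hR m n k l hmk hnl
        rwa [magicThd_thd_right i k hik, magicThd_thd_right j l hjl] at this
      have h3 : u k l * u m n = u k l * u i j := by
        have := hR k l m n (Ne.symm hmk) (Ne.symm hnl)
        rwa [magicThd_right_thd i k hik, magicThd_right_thd j l hjl] at this
      have h2' : u k l * u m n = u i j * u m n := by
        have := congrArg star h2
        simpa [star_mul, hstar] using this
      show u i j * u k l = u k l * u i j
      rw [h1, ← h2', h3]
end

section
/- For the tensor product of complex Hadamard matrices: if H ∈ M_n(ℂ) and K ∈ M_m(ℂ) are complex Hadamard matrices and L ∈ M_{m×n}(ℂ) has all entries of modulus 1, then the Diță deformation H ⊗_L K, with entries (H ⊗_L K)_{(i,a),(j,b)} = H_{ij} L_{aj} K_{ab}, is a complex Hadamard matrix of size nm. -/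
namespace Matrix

variable {α 𝕜 ι κ : Type*}

def ditaDeformation [Mul α] (H : Matrix ι ι α) (K : Matrix κ κ α) (L : Matrix κ ι α) :
    Matrix (ι × κ) (ι × κ) α :=
  of fun p q => H p.1 q.1 * L p.2 q.1 * K p.2 q.2

lemma ditaDeformation_apply [Mul α] (H : Matrix ι ι α) (K : Matrix κ κ α) (L : Matrix κ ι α)
    (i j : ι) (a b : κ) :
    ditaDeformation H K L (i, a) (j, b) = H i j * L a j * K a b :=
  rfl

variable [RCLike 𝕜]

lemma norm_ditaDeformation_apply_eq_one {H : Matrix ι ι 𝕜} {K : Matrix κ κ 𝕜}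
    {L : Matrix κ ι 𝕜} (hH : ∀ i j, ‖H i j‖ = 1) (hK : ∀ a b, ‖K a b‖ = 1)
    (hL : ∀ a j, ‖L a j‖ = 1) (p q : ι × κ) :
    ‖ditaDeformation H K L p q‖ = 1 := by
  simp [ditaDeformation, hH, hK, hL]

variable [Fintype ι] [Fintype κ]

lemma sum_ditaDeformation_mul_conj (H : Matrix ι ι 𝕜) (K : Matrix κ κ 𝕜)
    (L : Matrix κ ι 𝕜) (i j : ι) (a b : κ) :
    ∑ r, ditaDeformation H K L (i, a) r * starRingEnd 𝕜 (ditaDeformation H K L (j, b) r) =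
      ∑ c, H i c * starRingEnd 𝕜 (H j c) * (L a c * starRingEnd 𝕜 (L b c)) *
        ∑ d, K a d * starRingEnd 𝕜 (K b d) := by
  rw [Fintype.sum_prod_type]
  refine Finset.sum_congr rfl fun c _ => ?_
  rw [Finset.mul_sum]
  refine Finset.sum_congr rfl fun d _ => ?_
  simp only [ditaDeformation_apply, map_mul]
  ring

lemma ditaDeformation_rows_orthogonal {H : Matrix ι ι 𝕜} {K : Matrix κ κ 𝕜}
    {L : Matrix κ ι 𝕜}
    (hH : ∀ i j, i ≠ j → ∑ k, H i k * starRingEnd 𝕜 (H j k) = 0)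
    (hK : ∀ a b, a ≠ b → ∑ c, K a c * starRingEnd 𝕜 (K b c) = 0)
    (hL : ∀ a j, ‖L a j‖ = 1) {p q : ι × κ} (hpq : p ≠ q) :
    ∑ r, ditaDeformation H K L p r * starRingEnd 𝕜 (ditaDeformation H K L q r) = 0 := by
  obtain ⟨i, a⟩ := p
  obtain ⟨j, b⟩ := q
  rw [sum_ditaDeformation_mul_conj]
  by_cases hab : a = b
  · subst hab
    have hij : i ≠ j := fun h => hpq (by rw [h])
    -- within one block row the phases of `L` cancel, leaving an inner product of rows of `H`
    have hLL : ∀ c, L a c * starRingEnd 𝕜 (L a c) = 1 := fun c => by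
      rw [RCLike.mul_conj, hL, RCLike.ofReal_one, one_pow]
    simp only [hLL, mul_one, ← Finset.sum_mul, hH i j hij, zero_mul]
  · simp only [hK a b hab, mul_zero, Finset.sum_const_zero]

end Matrix

open Matrix in
/-- Diță deformation: if `H ∈ M_n(ℂ)` and `K ∈ M_m(ℂ)` are complex Hadamard
matrices and `L ∈ M_{m×n}(𝕋)` has all entries of modulus 1, then `H ⊗_L K`, with
entries `(H ⊗_L K)_{(i,a),(j,b)} = H_{ij} L_{aj} K_{ab}`, is a complex Hadamard
matrix of size `nm`. -/
theorem dita_deformation_hadamard {n m : ℕ}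
    (H : Matrix (Fin n) (Fin n) ℂ) (K : Matrix (Fin m) (Fin m) ℂ)
    (L : Matrix (Fin m) (Fin n) ℂ)
    (hHmod : ∀ i j, ‖H i j‖ = 1)
    (hHrows : ∀ i j, i ≠ j → ∑ k, H i k * (starRingEnd ℂ) (H j k) = 0)
    (hKmod : ∀ a b, ‖K a b‖ = 1)
    (hKrows : ∀ a b, a ≠ b → ∑ c, K a c * (starRingEnd ℂ) (K b c) = 0)
    (hLmod : ∀ a j, ‖L a j‖ = 1)
    (D : Matrix (Fin n × Fin m) (Fin n × Fin m) ℂ)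
    (hD : ∀ i a j b, D (i, a) (j, b) = H i j * L a j * K a b) :
    (∀ p q, ‖D p q‖ = 1) ∧
    (∀ p q, p ≠ q → ∑ r, D p r * (starRingEnd ℂ) (D q r) = 0) := by
  obtain rfl : D = ditaDeformation H K L := by
    ext ⟨i, a⟩ ⟨j, b⟩
    exact hD i a j b
  exact ⟨norm_ditaDeformation_apply_eq_one hHmod hKmod hLmod,
    fun _ _ => ditaDeformation_rows_orthogonal hHrows hKrows hLmod⟩
end

section
/- The Pauli matrix model is multiplicative into projections: for c_1 = [[1,0],[0,1]], c_2 = [[i,0],[0,−i]], c_3 = [[0,1],[−1,0]], c_4 = [[0,i],[i,0]] and any x ∈ SU(2), the matrices U_{ij}^x = Proj(c_i x c_j) (orthogonal projection in M_2(ℂ) ≅ ℂ^4 with normalized trace inner product onto the line spanned by c_i x c_j) form a 4×4 magic matrix: each row and column sums to the identity of M_4(ℂ) ≅ B(M_2(ℂ)). -/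
open Complex BigOperators Matrix

/-! The Pauli matrices are unitary and resolve the identity: `∑ᵢ ⟪cᵢ, a⟫ cᵢ = a` for the
normalized trace inner product. Multiplying on the left and right by unitaries `u, v` preserves
this inner product, so the family `u cᵢ v` resolves the identity as well. Row `j` of the model
is the translate with `u = 1, v = x c_j` and column `i` the one with `u = c_i x, v = 1`; each
`c_i x c_j` is unitary, hence of norm one, so every `U_{ij}` is idempotent. -/

namespace Matrix

variable {n : Type*} [Fintype n]

/-- `⟪b, a⟫ • b` for the normalized trace inner product `⟪b, a⟫ = tr (bᴴ a) / card n`: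
the orthogonal projection onto `ℂ ∙ b` when `⟪b, b⟫ = 1`, e.g. when `b` is unitary. -/
noncomputable def lineProj (b a : Matrix n n ℂ) : Matrix n n ℂ :=
  ((bᴴ * a).trace / Fintype.card n) • b

theorem lineProj_smul (b a : Matrix n n ℂ) (r : ℂ) :
    lineProj b (r • a) = r • lineProj b a := by
  simp only [lineProj, Matrix.mul_smul, trace_smul, smul_eq_mul, smul_smul, mul_div_assoc]

theorem lineProj_self [DecidableEq n] [Nonempty n] {b : Matrix n n ℂ}
    (hb : b ∈ unitaryGroup n ℂ) : lineProj b b = b := by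
  rw [lineProj, ← star_eq_conjTranspose, (mem_unitaryGroup_iff'.mp hb), trace_one,
    div_self (Nat.cast_ne_zero.mpr Fintype.card_ne_zero), one_smul]

theorem lineProj_idem [DecidableEq n] [Nonempty n] {b : Matrix n n ℂ}
    (hb : b ∈ unitaryGroup n ℂ) (a : Matrix n n ℂ) : lineProj b (lineProj b a) = lineProj b a := by
  conv_lhs => arg 2; rw [lineProj]
  rw [lineProj_smul, lineProj_self hb, lineProj]

theorem lineProj_mul_mul (u b v a : Matrix n n ℂ) :
    lineProj (u * b * v) a = u * lineProj b (uᴴ * a * vᴴ) * v := by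
  have htrace : ((u * b * v)ᴴ * a).trace = (bᴴ * (uᴴ * a * vᴴ)).trace := by
    simp only [conjTranspose_mul, Matrix.mul_assoc]
    rw [trace_mul_comm]
    simp only [Matrix.mul_assoc]
  rw [lineProj, lineProj, htrace, Matrix.mul_smul, Matrix.smul_mul]

theorem sum_lineProj_mul_mul [DecidableEq n] {ι : Type*} [Fintype ι] {b : ι → Matrix n n ℂ}
    (hb : ∀ a, ∑ i, lineProj (b i) a = a) {u v : Matrix n n ℂ}
    (hu : u ∈ unitaryGroup n ℂ) (hv : v ∈ unitaryGroup n ℂ) (a : Matrix n n ℂ) :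
    ∑ i, lineProj (u * b i * v) a = a := by
  simp_rw [lineProj_mul_mul, ← Finset.sum_mul, ← Finset.mul_sum, hb, ← star_eq_conjTranspose,
    Matrix.mul_assoc, (mem_unitaryGroup_iff'.mp hv), Matrix.mul_one, ← Matrix.mul_assoc,
    (mem_unitaryGroup_iff.mp hu), Matrix.one_mul]

end Matrix

def pauli : Fin 4 → Matrix (Fin 2) (Fin 2) ℂ :=
  ![1, !![Complex.I, 0; 0, -Complex.I], !![0, 1; -1, 0], !![0, Complex.I; Complex.I, 0]]

theorem pauli_mem_unitaryGroup (i : Fin 4) : pauli i ∈ unitaryGroup (Fin 2) ℂ := by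
  rw [mem_unitaryGroup_iff, star_eq_conjTranspose]
  fin_cases i <;> ext k l <;> fin_cases k <;> fin_cases l <;>
    simp [pauli, mul_apply, Fin.sum_univ_two, one_apply]

theorem sum_lineProj_pauli (a : Matrix (Fin 2) (Fin 2) ℂ) : ∑ i, lineProj (pauli i) a = a := by
  ext k l
  fin_cases k <;> fin_cases l <;>
    simp [pauli, lineProj, Fin.sum_univ_four, trace, mul_apply, Fin.sum_univ_two, one_apply] <;>
    ring_nf <;> simp only [I_sq] <;> ring

/-- The Pauli matrix model: for `x ∈ SU(2)` and the Pauli basis `c₁,…,c₄` of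
`M_2(ℂ)` (a Hilbert space under `⟨a,b⟩ = tr(a*b)/2`), the rank-one projections
`U_{ij}^x = Proj(c_i x c_j)` form a `4 × 4` magic matrix: each `U_{ij}^x` is an
idempotent, and each row and each column sums to the identity of `B(M_2(ℂ))`. -/
theorem pauli_model_magic
    (c : Fin 4 → Matrix (Fin 2) (Fin 2) ℂ)
    (hc : c = ![1, !![Complex.I, 0; 0, -Complex.I], !![0, 1; -1, 0],
      !![0, Complex.I; Complex.I, 0]])
    (x : Matrix (Fin 2) (Fin 2) ℂ) (hx : x ∈ Matrix.specialUnitaryGroup (Fin 2) ℂ)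
    (U : Fin 4 → Fin 4 → Matrix (Fin 2) (Fin 2) ℂ → Matrix (Fin 2) (Fin 2) ℂ)
    (hU : ∀ i j a, U i j a =
      ((((c i * x * c j)ᴴ * a).trace) / 2) • (c i * x * c j)) :
    (∀ i j a, U i j (U i j a) = U i j a) ∧
    (∀ j a, ∑ i, U i j a = a) ∧
    (∀ i a, ∑ j, U i j a = a) := by
  obtain rfl : c = pauli := hc
  have hU_eq : ∀ i j, U i j = lineProj (pauli i * x * pauli j) := fun i j ↦ by
    ext1 a
    simp [hU, lineProj]
  have hx_unitary : x ∈ unitaryGroup (Fin 2) ℂ := (mem_specialUnitaryGroup_iff.mp hx).1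
  have hpx (i : Fin 4) : pauli i * x ∈ unitaryGroup (Fin 2) ℂ :=
    mul_mem (pauli_mem_unitaryGroup i) hx_unitary
  have hxp (j : Fin 4) : x * pauli j ∈ unitaryGroup (Fin 2) ℂ :=
    mul_mem hx_unitary (pauli_mem_unitaryGroup j)
  refine ⟨fun i j a ↦ ?_, fun j a ↦ ?_, fun i a ↦ ?_⟩
  · rw [hU_eq]
    exact lineProj_idem (mul_mem (hpx i) (pauli_mem_unitaryGroup j)) a
  · simpa [hU_eq, Matrix.mul_assoc] using
      sum_lineProj_mul_mul sum_lineProj_pauli (one_mem _) (hxp j) a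
  · simpa [hU_eq] using sum_lineProj_mul_mul sum_lineProj_pauli (hpx i) (one_mem _) a
end
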